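/- Consider the one-pool pooling problem. The infimum of the objective value c·x + d·y over all pooling-feasible flows (x, y) equals the minimum of val(J(ε)) over all ε ∈ {0,1}^{n×q} with P(ε) ∩ Δ^{m−1} ≠ ∅ (this minimum is over a nonempty finite set, and for every such ε the feasible set F(J(ε)) is nonempty). -/
import Mathlib


/-!
One-pool pooling problem (with `m + 1 ≥ 1` inputs, `n` outputs, `q` qualities,
and nonnegative capacities so that the zero flow is feasible): the infimum of
the objective over all pooling-feasible flows equals the minimum of
`val(J(ε))` over all `ε ∈ {0,1}^{n×q}` with `P(ε) ∩ Δ^{m−1} ≠ ∅`; this minimum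
is over a nonempty finite set, and for every such `ε` the feasible set
`F(J(ε))` is nonempty.
-/

open Finset

/-- `(x, y)` is a flow: nonnegative, flow conservation at the pool, pool
capacity `C`, and arc capacities `u`, `w`. -/
def IsFlow (m n : ℕ) (u : Fin (m + 1) → ℝ) (w : Fin n → ℝ) (C : ℝ)
    (x : Fin (m + 1) → ℝ) (y : Fin n → ℝ) : Prop :=
  (∀ i, 0 ≤ x i) ∧ (∀ j, 0 ≤ y j) ∧ (∑ i, x i = ∑ j, y j) ∧
    (∑ i, x i ≤ C) ∧ (∀ i, x i ≤ u i) ∧ (∀ j, y j ≤ w j)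

/-- `(x, y)` is pooling-feasible: it is a flow and there are pool quality
values `p` satisfying the blending equation and the output quality bounds. -/
def PoolingFeasible (m n q : ℕ) (u : Fin (m + 1) → ℝ) (w : Fin n → ℝ) (C : ℝ)
    (lam : Fin (m + 1) → Fin q → ℝ) (mu : Fin n → Fin q → ℝ)
    (x : Fin (m + 1) → ℝ) (y : Fin n → ℝ) : Prop :=
  IsFlow m n u w C x y ∧
    ∃ p : Fin q → ℝ,
      (∀ k, p k * (∑ j, y j) = ∑ i, lam i k * x i) ∧
      (∀ j k, p k * y j ≤ mu j k * y j)

/-- `(x, y)` belongs to the feasible set `F(J')` of the linear program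
`LP(J')`. -/
def LPFeasible (m n q : ℕ) (u : Fin (m + 1) → ℝ) (w : Fin n → ℝ) (C : ℝ)
    (lam : Fin (m + 1) → Fin q → ℝ) (mu : Fin n → Fin q → ℝ)
    (J' : Set (Fin n)) (x : Fin (m + 1) → ℝ) (y : Fin n → ℝ) : Prop :=
  IsFlow m n u w C x y ∧ (∀ j, j ∉ J' → y j = 0) ∧
    ∀ j ∈ J', ∀ k,
      ∑ i : Fin m, (lam i.castSucc k - lam (Fin.last m) k) * x i.castSucc
        ≤ (mu j k - lam (Fin.last m) k) * ∑ i, x i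


/-- `val(J')`: the optimal (infimum) value of the linear program `LP(J')`. -/
noncomputable def lpVal (m n q : ℕ) (c u : Fin (m + 1) → ℝ) (d w : Fin n → ℝ)
    (C : ℝ) (lam : Fin (m + 1) → Fin q → ℝ) (mu : Fin n → Fin q → ℝ)
    (J' : Set (Fin n)) : ℝ :=
  sInf {v | ∃ x y, LPFeasible m n q u w C lam mu J' x y ∧
    v = ∑ i, c i * x i + ∑ j, d j * y j}

/-- `P(ε)`: the sign region of the hyperplane arrangement determined by
`ε ∈ {0,1}^{n×q}` (`false` meaning `0`, `true` meaning `1`). -/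
def Peps (m n q : ℕ) (lam : Fin (m + 1) → Fin q → ℝ)
    (mu : Fin n → Fin q → ℝ) (ε : Fin n → Fin q → Bool) :
    Set (Fin m → ℝ) :=
  {z | (∀ j k, ε j k = false →
          ∑ i : Fin m, (lam i.castSucc k - lam (Fin.last m) k) * z i
            ≤ mu j k - lam (Fin.last m) k) ∧
       (∀ j k, ε j k = true →
          mu j k - lam (Fin.last m) k
            < ∑ i : Fin m, (lam i.castSucc k - lam (Fin.last m) k) * z i)}

/-- `J(ε)`: the outputs whose constraints are all satisfied according to `ε`. -/
def Jeps (n q : ℕ) (ε : Fin n → Fin q → Bool) : Set (Fin n) :=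
  {j | ∀ k, ε j k = false}

/-- The simplex `Δ^{m−1} ⊆ ℝ^m`. -/
def simplex (m : ℕ) : Set (Fin m → ℝ) :=
  {z | (∀ i, 0 ≤ z i) ∧ ∑ i, z i ≤ 1}


section PoolingHelpers

variable {m n q : ℕ} {c u : Fin (m + 1) → ℝ} {d w : Fin n → ℝ} {C : ℝ}
  {lam : Fin (m + 1) → Fin q → ℝ} {mu : Fin n → Fin q → ℝ}

lemma zeroIsFlow (hu : ∀ i, 0 ≤ u i) (hw : ∀ j, 0 ≤ w j) (hC : 0 ≤ C) :
    IsFlow m n u w C (fun _ => 0) (fun _ => 0) :=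
  ⟨fun _ => le_refl _, fun _ => le_refl _, by simp, by simpa using hC,
    fun i => hu i, fun j => hw j⟩

lemma pooling_sum_shift (k : Fin q) (x : Fin (m + 1) → ℝ) :
    ∑ i : Fin m, (lam i.castSucc k - lam (Fin.last m) k) * x i.castSucc
      = ∑ i, lam i k * x i - lam (Fin.last m) k * ∑ i, x i := by
  rw [Fin.sum_univ_castSucc (f := fun i => lam i k * x i),
    Fin.sum_univ_castSucc (f := x)]
  simp only [sub_mul, Finset.sum_sub_distrib, Finset.mul_sum, mul_add]
  ring

lemma flow_lb {x : Fin (m + 1) → ℝ} {y : Fin n → ℝ}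
    (h : IsFlow m n u w C x y) :
    -(∑ i, |c i| * u i + ∑ j, |d j| * w j)
      ≤ ∑ i, c i * x i + ∑ j, d j * y j := by
  obtain ⟨hx, hy, -, -, hxu, hyw⟩ := h
  have h1 : 0 ≤ ∑ i, (c i * x i + |c i| * u i) :=
    Finset.sum_nonneg fun i _ => by
      nlinarith [mul_le_mul_of_nonneg_left (hxu i) (abs_nonneg (c i)),
        mul_le_mul_of_nonneg_right (neg_abs_le (c i)) (hx i)]
  have h2 : 0 ≤ ∑ j, (d j * y j + |d j| * w j) :=
    Finset.sum_nonneg fun j _ => by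
      nlinarith [mul_le_mul_of_nonneg_left (hyw j) (abs_nonneg (d j)),
        mul_le_mul_of_nonneg_right (neg_abs_le (d j)) (hy j)]
  rw [Finset.sum_add_distrib] at h1 h2
  linarith

lemma lp_to_pool {J' : Set (Fin n)} {x : Fin (m + 1) → ℝ} {y : Fin n → ℝ}
    (h : LPFeasible m n q u w C lam mu J' x y) :
    PoolingFeasible m n q u w C lam mu x y := by
  obtain ⟨hf, hy0, hcon⟩ := h
  have hT0 : (0 : ℝ) ≤ ∑ i, x i := Finset.sum_nonneg fun i _ => hf.1 i
  have hyx : ∑ j, y j = ∑ i, x i := hf.2.2.1.symm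
  refine ⟨hf, fun k => (∑ i, lam i k * x i) / (∑ i, x i), fun k => ?_, fun j k => ?_⟩
  · rcases hT0.eq_or_lt with hT | hT
    · have hxz : ∀ i ∈ Finset.univ, x i = 0 :=
        (Finset.sum_eq_zero_iff_of_nonneg (fun i _ => hf.1 i)).mp hT.symm
      have hlx : ∑ i, lam i k * x i = 0 :=
        Finset.sum_eq_zero fun i hi => by rw [hxz i hi, mul_zero]
      rw [hlx, hyx, ← hT]
      simp
    · rw [hyx, div_mul_cancel₀ _ hT.ne']
  · rcases (hf.2.1 j).eq_or_lt with hyj | hyj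
    · rw [← hyj, mul_zero, mul_zero]
    · have hjJ : j ∈ J' := by
        by_contra hjJ
        exact hyj.ne (hy0 j hjJ).symm
      have hTy : y j ≤ ∑ j', y j' :=
        Finset.single_le_sum (fun j' _ => hf.2.1 j') (Finset.mem_univ j)
      have hT : (0 : ℝ) < ∑ i, x i := by rw [← hyx]; linarith
      have hc := hcon j hjJ k
      rw [pooling_sum_shift] at hc
      have hle : ∑ i, lam i k * x i ≤ mu j k * ∑ i, x i := by nlinarith
      have hp : (∑ i, lam i k * x i) / (∑ i, x i) ≤ mu j k :=
        (div_le_iff₀ hT).mpr hle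
      exact mul_le_mul_of_nonneg_right hp hyj.le

lemma pool_to_lp {x : Fin (m + 1) → ℝ} {y : Fin n → ℝ}
    (h : PoolingFeasible m n q u w C lam mu x y) :
    ∃ ε : Fin n → Fin q → Bool, (Peps m n q lam mu ε ∩ simplex m).Nonempty ∧
      LPFeasible m n q u w C lam mu (Jeps n q ε) x y := by
  obtain ⟨hf, p, hp1, hp2⟩ := h
  have hT0 : (0 : ℝ) ≤ ∑ i, x i := Finset.sum_nonneg fun i _ => hf.1 i
  have hyx : ∑ j, y j = ∑ i, x i := hf.2.2.1.symm
  rcases hT0.eq_or_lt with hT | hT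
  · -- zero flow
    have hxz : ∀ i ∈ Finset.univ, x i = 0 :=
      (Finset.sum_eq_zero_iff_of_nonneg (fun i _ => hf.1 i)).mp hT.symm
    have hx : ∀ i, x i = 0 := fun i => hxz i (Finset.mem_univ i)
    have hyz : ∀ j ∈ Finset.univ, y j = 0 :=
      (Finset.sum_eq_zero_iff_of_nonneg (fun j _ => hf.2.1 j)).mp
        (by rw [hyx, ← hT])
    have hy : ∀ j, y j = 0 := fun j => hyz j (Finset.mem_univ j)
    refine ⟨fun j k => decide (mu j k - lam (Fin.last m) k < 0),
      ⟨fun _ => 0, ⟨?_, ?_⟩, fun i => le_refl _, by simp⟩,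
      hf, fun j _ => hy j, fun j _ k => ?_⟩
    · intro j k hjk
      have := not_lt.mp (of_decide_eq_false hjk)
      simpa using this
    · intro j k hjk
      simpa using of_decide_eq_true hjk
    · simp [hx]
  · -- positive total flow
    have hpk : ∀ k, p k = (∑ i, lam i k * x i) / (∑ i, x i) := fun k =>
      (eq_div_iff hT.ne').mpr (by rw [← hyx]; exact hp1 k)
    set z : Fin m → ℝ := fun i => x i.castSucc / ∑ i, x i with hz
    have hxz : ∀ i : Fin m, x i.castSucc = z i * ∑ i, x i := fun i =>
      (div_mul_cancel₀ _ hT.ne').symm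
    have hzsum : ∀ k : Fin q,
        ∑ i : Fin m, (lam i.castSucc k - lam (Fin.last m) k) * z i
          = p k - lam (Fin.last m) k := by
      intro k
      have hstep : ∑ i : Fin m, (lam i.castSucc k - lam (Fin.last m) k) * z i
          = (∑ i : Fin m, (lam i.castSucc k - lam (Fin.last m) k) * x i.castSucc)
              / ∑ i, x i := by
        rw [Finset.sum_div]
        exact Finset.sum_congr rfl fun i _ => by rw [hz]; rw [mul_div_assoc]
      rw [hstep, pooling_sum_shift, sub_div, hpk k,
        mul_div_cancel_right₀ _ hT.ne']
    refine ⟨fun j k => decide (mu j k - lam (Fin.last m) k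
        < ∑ i : Fin m, (lam i.castSucc k - lam (Fin.last m) k) * z i),
      ⟨z, ⟨?_, ?_⟩, fun i => div_nonneg (hf.1 _) hT0, ?_⟩,
      hf, ?_, ?_⟩
    · intro j k hjk
      exact not_lt.mp (of_decide_eq_false hjk)
    · intro j k hjk
      exact of_decide_eq_true hjk
    · -- sum z ≤ 1
      have : ∑ i : Fin m, z i = (∑ i : Fin m, x i.castSucc) / ∑ i, x i := by
        rw [Finset.sum_div]
      rw [this, div_le_one hT, Fin.sum_univ_castSucc (f := x)]
      nlinarith [hf.1 (Fin.last m)]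
    · -- y j = 0 off J(ε)
      intro j hj
      rw [Jeps, Set.mem_setOf_eq] at hj
      push_neg at hj
      obtain ⟨k, hk⟩ := hj
      have hk' : mu j k - lam (Fin.last m) k
          < ∑ i : Fin m, (lam i.castSucc k - lam (Fin.last m) k) * z i :=
        of_decide_eq_true (Bool.not_eq_false _ |>.mp hk)
      rw [hzsum k] at hk'
      have hmu : mu j k < p k := by linarith
      have hle := hp2 j k
      nlinarith [hf.2.1 j]
    · -- LP constraints on J(ε)
      intro j hj k
      have hk : ∑ i : Fin m, (lam i.castSucc k - lam (Fin.last m) k) * z i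
          ≤ mu j k - lam (Fin.last m) k :=
        not_lt.mp (of_decide_eq_false (hj k))
      have hstep : ∑ i : Fin m, (lam i.castSucc k - lam (Fin.last m) k) * x i.castSucc
          = (∑ i : Fin m, (lam i.castSucc k - lam (Fin.last m) k) * z i)
              * ∑ i, x i := by
        rw [Finset.sum_mul]
        exact Finset.sum_congr rfl fun i _ => by rw [hxz i]; ring
      rw [hstep]
      exact mul_le_mul_of_nonneg_right hk hT0

end PoolingHelpers

theorem stmt11 (m n q : ℕ) (hn : 0 < n) (hq : 0 < q)
    (c u : Fin (m + 1) → ℝ) (d w : Fin n → ℝ) (C : ℝ)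
    (hu : ∀ i, 0 ≤ u i) (hw : ∀ j, 0 ≤ w j) (hC : 0 ≤ C)
    (lam : Fin (m + 1) → Fin q → ℝ) (mu : Fin n → Fin q → ℝ) :
    -- the minimum is over a nonempty (finite) set:
    {ε : Fin n → Fin q → Bool |
      (Peps m n q lam mu ε ∩ simplex m).Nonempty}.Nonempty ∧
    -- for every such ε the feasible set F(J(ε)) is nonempty:
    (∀ ε : Fin n → Fin q → Bool, (Peps m n q lam mu ε ∩ simplex m).Nonempty →
      ∃ x y, LPFeasible m n q u w C lam mu (Jeps n q ε) x y) ∧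
    -- the optimal value of the pooling problem equals the minimum of the
    -- values val(J(ε)) over all ε with P(ε) ∩ Δ^{m−1} ≠ ∅:
    sInf {v | ∃ x y, PoolingFeasible m n q u w C lam mu x y ∧
        v = ∑ i, c i * x i + ∑ j, d j * y j}
      = sInf {v | ∃ ε : Fin n → Fin q → Bool,
          (Peps m n q lam mu ε ∩ simplex m).Nonempty ∧
          v = lpVal m n q c u d w C lam mu (Jeps n q ε)} := by
  classical
  set L : ℝ := -(∑ i, |c i| * u i + ∑ j, |d j| * w j) with hL
  have hε0 : ((fun j k => decide (mu j k - lam (Fin.last m) k < 0)) :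
      Fin n → Fin q → Bool) ∈
      {ε : Fin n → Fin q → Bool | (Peps m n q lam mu ε ∩ simplex m).Nonempty} := by
    refine ⟨fun _ => 0, ⟨?_, ?_⟩, fun i => le_refl _, by simp⟩
    · intro j k hjk
      have := not_lt.mp (of_decide_eq_false hjk)
      simpa using this
    · intro j k hjk
      simpa using of_decide_eq_true hjk
  have hzeroLP : ∀ J' : Set (Fin n),
      LPFeasible m n q u w C lam mu J' (fun _ => 0) (fun _ => 0) := by
    intro J'
    exact ⟨zeroIsFlow hu hw hC, fun j _ => rfl, fun j _ k => by simp⟩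
  refine ⟨⟨_, hε0⟩, fun ε _ => ⟨_, _, hzeroLP (Jeps n q ε)⟩, ?_⟩
  set A : Set ℝ := {v | ∃ x y, PoolingFeasible m n q u w C lam mu x y ∧
      v = ∑ i, c i * x i + ∑ j, d j * y j} with hA
  set TS : (Fin n → Fin q → Bool) → Set ℝ := fun ε =>
    {v | ∃ x y, LPFeasible m n q u w C lam mu (Jeps n q ε) x y ∧
      v = ∑ i, c i * x i + ∑ j, d j * y j} with hTS
  have hval : ∀ ε, lpVal m n q c u d w C lam mu (Jeps n q ε) = sInf (TS ε) :=
    fun ε => rfl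
  have hLA : ∀ v ∈ A, L ≤ v := by
    rintro v ⟨x, y, hxy, rfl⟩
    exact flow_lb hxy.1
  have hLT : ∀ ε, ∀ v ∈ TS ε, L ≤ v := by
    rintro ε v ⟨x, y, hxy, rfl⟩
    exact flow_lb hxy.1
  have hAne : A.Nonempty := by
    refine ⟨∑ i, c i * (0:ℝ) + ∑ j, d j * (0:ℝ), fun _ => 0, fun _ => 0, ?_, rfl⟩
    exact lp_to_pool (hzeroLP Set.univ)
  have hTne : ∀ ε, (TS ε).Nonempty := fun ε =>
    ⟨∑ i, c i * (0:ℝ) + ∑ j, d j * (0:ℝ), fun _ => 0, fun _ => 0,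
      hzeroLP (Jeps n q ε), rfl⟩
  have hTsub : ∀ ε, TS ε ⊆ A := by
    rintro ε v ⟨x, y, hxy, rfl⟩
    exact ⟨x, y, lp_to_pool hxy, rfl⟩
  have hABdd : BddBelow A := ⟨L, hLA⟩
  apply le_antisymm
  · refine le_csInf ⟨_, _, hε0, rfl⟩ ?_
    rintro b ⟨ε, hεne, rfl⟩
    rw [hval ε]
    exact csInf_le_csInf hABdd (hTne ε) (hTsub ε)
  · refine le_csInf hAne ?_
    rintro a ⟨x, y, hxy, rfl⟩
    obtain ⟨ε, hεne, hlp⟩ := pool_to_lp hxy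
    have h1 : sInf {v | ∃ ε : Fin n → Fin q → Bool,
        (Peps m n q lam mu ε ∩ simplex m).Nonempty ∧
        v = lpVal m n q c u d w C lam mu (Jeps n q ε)}
        ≤ lpVal m n q c u d w C lam mu (Jeps n q ε) := by
      refine csInf_le ⟨L, ?_⟩ ⟨ε, hεne, rfl⟩
      rintro b ⟨ε', hε'ne, rfl⟩
      rw [hval ε']
      exact le_csInf (hTne ε') (hLT ε')
    have h2 : lpVal m n q c u d w C lam mu (Jeps n q ε)
        ≤ ∑ i, c i * x i + ∑ j, d j * y j := by
      rw [hval ε]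
      exact csInf_le ⟨L, hLT ε⟩ ⟨x, y, hlp, rfl⟩
    linarith
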